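/- Let Λ be the free ℤ-module with basis E_1, …, E_N and bilinear form E_a · E_b = −δ_{ab}. For i ∈ {1,…,n} let J_i ⊆ {i+1,…,n} and e_i = E_i − Σ_{j ∈ J_i} E_j, and assume e_a · e_b ≥ 0 for all a ≠ b. Consider the undirected graph G on vertex set {1,…,n} with an edge between i and j iff j ∈ J_i or i ∈ J_j. Then G is chordal: every cycle in G of length at least 4 has a chord; equivalently, every minimal cycle of G is a triangle. -/

import Mathlib

/-!
Let `m` be the largest vertex of a cycle and `a`, `b` its two neighbours on it. Edges point
upwards, so `m ∈ J a ∩ J b`; if `a` and `b` were not adjacent, expanding the form would give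
`e_a · e_b = -#(J a ∩ J b) < 0`. Thus the smaller neighbours of every vertex form a clique (the
decreasing order is a perfect elimination ordering), and on a cycle of length at least `4` the
edge `ab` is a chord.
-/

/-- The basis vector `E i` of the free ℤ-module on `Fin n`. -/
def Ebasis (n : ℕ) (i : Fin n) : Fin n → ℤ := Pi.single i 1

/-- The symmetric bilinear form determined by `E a · E b = -δ_{ab}`. -/
def Bform {n : ℕ} (x y : Fin n → ℤ) : ℤ := -(∑ c, x c * y c)

/-- The type I exceptional class `e i = E i - ∑_{j ∈ J i} E j`. -/
def eclass {n : ℕ} (J : Fin n → Finset (Fin n)) (i : Fin n) : Fin n → ℤ :=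
  Ebasis n i - ∑ j ∈ J i, Ebasis n j

/-- The undirected graph with an edge between `i` and `j` iff `j ∈ J i` or `i ∈ J j`. -/
def descGraph {n : ℕ} (J : Fin n → Finset (Fin n)) : SimpleGraph (Fin n) :=
  SimpleGraph.fromRel (fun i j => j ∈ J i)

open SimpleGraph Finset

namespace SimpleGraph.Walk

variable {V : Type*} {G : SimpleGraph V}

lemma isChord_rotate_iff [DecidableEq V] {v u : V} {c : G.Walk v v} (h : u ∈ c.support)
    {e : Sym2 V} :
    (c.rotate u h).IsChord e ↔ c.IsChord e := by
  induction e using Sym2.ind with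
  | _ x y => simp only [isChord_sym2Mk, mem_support_rotate_iff, (c.rotate_edges u h).mem_iff]

lemma IsCycle.mk_snd_penultimate_notMem_edges {u : V} {p : G.Walk u u} (hp : p.IsCycle)
    (h4 : 4 ≤ p.length) : s(p.snd, p.penultimate) ∉ p.edges := by
  have hnil := hp.not_nil
  have hedges : p.edges = s(u, p.snd) :: p.tail.edges := by
    conv_lhs => rw [← p.cons_tail_eq hnil, edges_cons]
  intro he
  rw [hedges, List.mem_cons] at he
  rcases he with he | he
  · rcases Sym2.eq_iff.mp he with ⟨hsnd, -⟩ | ⟨-, hpen⟩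
    · exact (p.adj_snd hnil).ne hsnd.symm
    · exact (p.adj_penultimate hnil).ne hpen
  · have hpen : p.penultimate = p.getVert 2 := by
      simpa using hp.isPath_tail.eq_snd_of_mem_edges he
    have := hp.getVert_injOn (by simp only [Set.mem_ofPred_eq]; omega)
      (by simp only [Set.mem_ofPred_eq]; omega) hpen
    omega

lemma IsCycle.isChord_snd_penultimate [LinearOrder V]
    (hG : ∀ m, G.IsClique {a | G.Adj a m ∧ a < m}) {m : V} {p : G.Walk m m}
    (hp : p.IsCycle) (h4 : 4 ≤ p.length) (hmax : ∀ x ∈ p.support, x ≤ m) :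
    p.IsChord s(p.snd, p.penultimate) := by
  have hnil := hp.not_nil
  have hsnd : G.Adj p.snd m := (p.adj_snd hnil).symm
  have hpen : G.Adj p.penultimate m := p.adj_penultimate hnil
  refine isChord_sym2Mk.mpr ⟨hG m ?_ ?_ hp.snd_ne_penultimate,
    hp.mk_snd_penultimate_notMem_edges h4, p.getVert_mem_support _, p.getVert_mem_support _⟩
  · exact ⟨hsnd, (hmax _ (p.getVert_mem_support _)).lt_of_ne hsnd.ne⟩
  · exact ⟨hpen, (hmax _ (p.getVert_mem_support _)).lt_of_ne hpen.ne⟩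

theorem IsCycle.exists_isChord_of_isClique_lt [LinearOrder V]
    (hG : ∀ m, G.IsClique {a | G.Adj a m ∧ a < m}) {v : V} {c : G.Walk v v}
    (hc : c.IsCycle) (h4 : 4 ≤ c.length) : ∃ e, c.IsChord e := by
  classical
  obtain ⟨m, hm, hmax⟩ := c.support.toFinset.exists_max_image id ⟨v, by simp⟩
  rw [List.mem_toFinset] at hm
  refine ⟨_, (isChord_rotate_iff hm).mp <|
    ((isCycle_rotate hm).mpr hc).isChord_snd_penultimate hG (by simpa using h4) ?_⟩
  simpa using hmax

end SimpleGraph.Walk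

lemma eclass_apply {n : ℕ} (J : Fin n → Finset (Fin n)) (i c : Fin n) :
    eclass J i c = (if c = i then 1 else 0) - (if c ∈ J i then 1 else 0) := by
  simp [eclass, Ebasis, Finset.sum_apply, Pi.single_apply, sum_ite_eq]

lemma Bform_eclass_eclass {n : ℕ} (J : Fin n → Finset (Fin n)) {a b : Fin n} (hab : a ≠ b) :
    Bform (eclass J a) (eclass J b) =
      (if a ∈ J b then 1 else 0) + (if b ∈ J a then 1 else 0) - #(J a ∩ J b) := by
  have hterm : ∀ c, eclass J a c * eclass J b c = (if c ∈ J a ∩ J b then 1 else 0)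
      - (if c ∈ {a} ∩ J b then 1 else 0) - (if c ∈ {b} ∩ J a then 1 else 0) := by
    intro c
    simp only [eclass_apply, mem_inter, mem_singleton]
    split_ifs <;> grind
  simp only [Bform, hterm, sum_sub_distrib, sum_boole, filter_mem_eq_inter, univ_inter,
    singleton_inter]
  split_ifs <;> simp only [card_singleton, card_empty] <;> push_cast <;> ring

lemma descGraph_adj_of_mem_inter {n : ℕ} {J : Fin n → Finset (Fin n)}
    (hpos : ∀ a b, a ≠ b → 0 ≤ Bform (eclass J a) (eclass J b)) {a b m : Fin n} (hab : a ≠ b)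
    (hm : m ∈ J a ∩ J b) : (descGraph J).Adj a b := by
  refine (fromRel_adj _ _ _).mpr ⟨hab, ?_⟩
  by_contra! hnot
  have hform := hpos a b hab
  rw [Bform_eclass_eclass J hab, if_neg hnot.2, if_neg hnot.1] at hform
  have : 0 < #(J a ∩ J b) := card_pos.mpr ⟨m, hm⟩
  omega

lemma mem_of_descGraph_adj_of_lt {n : ℕ} {J : Fin n → Finset (Fin n)}
    (hdesc : ∀ i, ∀ j ∈ J i, i < j) {a m : Fin n} (h : (descGraph J).Adj a m) (ham : a < m) :
    m ∈ J a := by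
  rcases ((fromRel_adj _ _ _).mp h).2 with h | h
  · exact h
  · exact absurd (hdesc m a h) ham.not_gt

lemma descGraph_isClique_lt {n : ℕ} {J : Fin n → Finset (Fin n)}
    (hdesc : ∀ i, ∀ j ∈ J i, i < j) (hpos : ∀ a b, a ≠ b → 0 ≤ Bform (eclass J a) (eclass J b))
    (m : Fin n) : (descGraph J).IsClique {a | (descGraph J).Adj a m ∧ a < m} := by
  rintro a ⟨ha, ham⟩ b ⟨hb, hbm⟩ hab
  exact descGraph_adj_of_mem_inter hpos hab <|
    mem_inter.mpr ⟨mem_of_descGraph_adj_of_lt hdesc ha ham, mem_of_descGraph_adj_of_lt hdesc hb hbm⟩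

/-- If `J_i ⊆ {i+1,…,n}` and all pairwise intersections `e_a · e_b` (`a ≠ b`) are
nonnegative, then the associated undirected graph is chordal: every cycle of
length at least `4` has a chord. -/
theorem stmt5 {n : ℕ} (J : Fin n → Finset (Fin n)) (hdesc : ∀ i, ∀ j ∈ J i, i < j)
    (hpos : ∀ a b, a ≠ b → 0 ≤ Bform (eclass J a) (eclass J b)) :
    ∀ (v : Fin n) (c : (descGraph J).Walk v v), c.IsCycle → 4 ≤ c.length →
      ∃ u w, (descGraph J).Adj u w ∧ u ∈ c.support ∧ w ∈ c.support ∧ s(u, w) ∉ c.edges := by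
  intro v c hc h4
  obtain ⟨e, he⟩ := hc.exists_isChord_of_isClique_lt (descGraph_isClique_lt hdesc hpos) h4
  induction e using Sym2.ind with
  | _ u w =>
    obtain ⟨hadj, hnot, hu, hw⟩ := Walk.isChord_sym2Mk.mp he
    exact ⟨u, w, hadj, hu, hw, hnot⟩
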